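/- Hoeffding's corollary for two moving averages: Let X_1, ..., X_{n+m} be independent random variables with values in the interval [a,b], let X̄ = (1/n)∑_{i=1}^n X_i and Z̄ = (1/(n+m))∑_{i=1}^{n+m} X_i. Then for all ε ≥ 0, P(X̄ - Z̄ - (E[X̄] - E[Z̄]) ≥ ε) ≤ exp(-2n(n+m)ε² / (m(b-a)²)). -/

import Mathlib

/-!
Writing `w i = 𝟙[i < n] / n - 1 / (n + m)`, the centred difference of the two averages is
`∑_{i < n + m} w i (X i - 𝔼 X i)`, a sum of independent variables, the `i`-th of which lies in an
interval of length `|w i| (b - a)`. Hoeffding's inequality bounds its upper tail by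
`exp (-2 ε² / ((b - a)² ∑ w i²))`, and `∑ w i² = n (m / (n (n + m)))² + m / (n + m)² = m / (n (n + m))`.
-/

open MeasureTheory ProbabilityTheory Finset Real

namespace ProbabilityTheory

theorem measureReal_sum_mul_sub_integral_ge_le {Ω ι : Type*} [MeasurableSpace Ω]
    {μ : Measure Ω} [IsProbabilityMeasure μ] {X : ι → Ω → ℝ} {s : Finset ι} {a b : ℝ}
    (hmeas : ∀ i ∈ s, AEMeasurable (X i) μ) (hindep : iIndepFun X μ)
    (hbound : ∀ i ∈ s, ∀ᵐ ω ∂μ, X i ω ∈ Set.Icc a b) (w : ι → ℝ) {ε : ℝ} (hε : 0 ≤ ε) :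
    μ.real {ω | ε ≤ ∑ i ∈ s, w i * (X i ω - μ[X i])}
      ≤ exp (-2 * ε ^ 2 / ((b - a) ^ 2 * ∑ i ∈ s, w i ^ 2)) := by
  have hindep' : iIndepFun (fun i ω ↦ w i * (X i ω - μ[X i])) μ := by
    exact hindep.comp (fun i x ↦ w i * (x - μ[X i])) fun i ↦ by fun_prop
  have hsubG : ∀ i ∈ s, HasSubgaussianMGF (fun ω ↦ w i * (X i ω - μ[X i]))
      (‖w i‖₊ ^ 2 * (‖b - a‖₊ / 2) ^ 2) μ := fun i hi ↦ by
    convert (hasSubgaussianMGF_of_mem_Icc (hmeas i hi) (hbound i hi)).const_mul (w i) using 2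
    ext
    rw [NNReal.coe_mul, NNReal.coe_pow, coe_nnnorm, Real.norm_eq_abs, sq_abs]
    -- `const_mul` writes its constant with a bare subtype literal, which no coercion lemma matches.
    rfl
  refine (HasSubgaussianMGF.measure_sum_ge_le_of_iIndepFun hindep' hsubG hε).trans_eq ?_
  push_cast
  simp only [Real.norm_eq_abs, div_pow, sq_abs, ← sum_mul]
  field_simp

end ProbabilityTheory

noncomputable def twoAveragesWeight (n m i : ℕ) : ℝ :=
  (if i < n then (1 / n : ℝ) else 0) - 1 / (n + m)

theorem twoAveragesWeight_of_lt {n m i : ℕ} (hi : i < n) :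
    twoAveragesWeight n m i = 1 / n - 1 / (n + m) := by
  simp [twoAveragesWeight, hi]

theorem twoAveragesWeight_add (n m i : ℕ) : twoAveragesWeight n m (n + i) = -(1 / (n + m)) := by
  simp [twoAveragesWeight]

theorem average_sub_average_eq_sum_twoAveragesWeight_mul (n m : ℕ) (f : ℕ → ℝ) :
    (1 / n : ℝ) * ∑ i ∈ range n, f i - (1 / (n + m) : ℝ) * ∑ i ∈ range (n + m), f i
      = ∑ i ∈ range (n + m), twoAveragesWeight n m i * f i := by
  have hfirst : ∑ i ∈ range (n + m), (if i < n then (1 / n : ℝ) else 0) * f i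
      = 1 / n * ∑ i ∈ range n, f i := by
    simp_rw [ite_mul, zero_mul, sum_range_add, add_lt_iff_neg_left, not_lt_zero, if_false,
      sum_const_zero, add_zero, mul_sum]
    exact sum_congr rfl fun i hi ↦ if_pos (mem_range.1 hi)
  simp only [twoAveragesWeight, sub_mul, sum_sub_distrib, hfirst, ← mul_sum]

theorem sum_twoAveragesWeight_sq {n : ℕ} (hn : 0 < n) (m : ℕ) :
    ∑ i ∈ range (n + m), twoAveragesWeight n m i ^ 2 = m / (n * (n + m)) := by
  rw [sum_range_add, sum_congr rfl fun i hi ↦ by rw [twoAveragesWeight_of_lt (mem_range.1 hi)]]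
  simp only [twoAveragesWeight_add, sum_const, card_range, nsmul_eq_mul]
  have : (n : ℝ) ≠ 0 := by positivity
  field_simp
  ring

theorem hoeffding_two_averages_general
    {Ω : Type*} [MeasurableSpace Ω] (μ : Measure Ω) [IsProbabilityMeasure μ]
    (n m : ℕ) (hn : 0 < n) (a b : ℝ)
    (X : ℕ → Ω → ℝ) (hmeas : ∀ i, Measurable (X i))
    (hindep : iIndepFun X μ)
    (hbound : ∀ i < n + m, ∀ᵐ ω ∂μ, X i ω ∈ Set.Icc a b)
    (ε : ℝ) (hε : 0 ≤ ε) :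
    (μ {ω | (1 / n : ℝ) * ∑ i ∈ Finset.range n, X i ω
          - (1 / (n + m) : ℝ) * ∑ i ∈ Finset.range (n + m), X i ω
          - (μ[fun ω => (1 / n : ℝ) * ∑ i ∈ Finset.range n, X i ω]
             - μ[fun ω => (1 / (n + m) : ℝ) * ∑ i ∈ Finset.range (n + m), X i ω])
          ≥ ε}).toReal
      ≤ Real.exp (-2 * (n : ℝ) * ((n : ℝ) + m) * ε ^ 2 / (m * (b - a) ^ 2)) := by
  have hint : ∀ i < n + m, Integrable (X i) μ := fun i hi ↦
    .of_mem_Icc a b (hmeas i).aemeasurable (hbound i hi)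
  have hmean (k : ℕ) (hk : k ≤ n + m) (c : ℝ) :
      μ[fun ω ↦ c * ∑ i ∈ range k, X i ω] = c * ∑ i ∈ range k, μ[X i] := by
    rw [integral_const_mul, integral_finsetSum _ fun i hi ↦ hint i ((mem_range.1 hi).trans_le hk)]
  rw [hmean n (Nat.le_add_right n m), hmean (n + m) le_rfl]
  simp only [average_sub_average_eq_sum_twoAveragesWeight_mul, ← sum_sub_distrib, ← mul_sub,
    ge_iff_le]
  refine (measureReal_sum_mul_sub_integral_ge_le (fun i _ ↦ (hmeas i).aemeasurable) hindep
    (fun i hi ↦ hbound i (mem_range.1 hi)) _ hε).trans_eq ?_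
  rw [sum_twoAveragesWeight_sq hn]
  field_simp

theorem hoeffding_two_averages
    {Ω : Type*} [MeasurableSpace Ω] (μ : Measure Ω) [IsProbabilityMeasure μ]
    (n m : ℕ) (hn : 0 < n) (hm : 0 < m) (a b : ℝ) (hab : a < b)
    (X : ℕ → Ω → ℝ) (hmeas : ∀ i, Measurable (X i))
    (hindep : iIndepFun X μ)
    (hbound : ∀ i < n + m, ∀ᵐ ω ∂μ, X i ω ∈ Set.Icc a b)
    (ε : ℝ) (hε : 0 ≤ ε) :
    (μ {ω | (1 / n : ℝ) * ∑ i ∈ Finset.range n, X i ω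
          - (1 / (n + m) : ℝ) * ∑ i ∈ Finset.range (n + m), X i ω
          - (μ[fun ω => (1 / n : ℝ) * ∑ i ∈ Finset.range n, X i ω]
             - μ[fun ω => (1 / (n + m) : ℝ) * ∑ i ∈ Finset.range (n + m), X i ω])
          ≥ ε}).toReal
      ≤ Real.exp (-2 * (n : ℝ) * ((n : ℝ) + m) * ε ^ 2 / (m * (b - a) ^ 2)) :=
  hoeffding_two_averages_general μ n m hn a b X hmeas hindep hbound ε hε
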